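/- Define h(n,k) = Σ_{j∈ℤ} q^{2j²−j} [⌊n/2⌋ choose k+j]_q [⌈n/2⌉ choose k+1−j]_q. Then h(n,k) = [n choose 2k+1]_q for all n ≥ 0 and all k. -/

import Mathlib

open LaurentPolynomial

/-- The Gaussian (q-)binomial coefficient `[n choose k]_q`, as a Laurent polynomial in `q`,
with the convention that it vanishes for `k < 0` or `k > n`.  Defined via the standard
Pascal-type recurrence `[n+1, k] = q^k [n, k] + [n, k-1]`. -/
noncomputable def qb : ℕ → ℤ → LaurentPolynomial ℤ
  | 0, k => if k = 0 then 1 else 0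
  | (n+1), k => T k * qb n k + qb n (k-1)

/-- The variable `q`. -/
noncomputable def q : LaurentPolynomial ℤ := T 1

/-- The Gaussian binomial coefficient in base `q²` (the paper's `\gaa`), i.e. the
Gaussian binomial coefficient with `q` replaced by `q²`, vanishing for `k < 0` or `k > n`. -/
noncomputable def qb2 : ℕ → ℤ → LaurentPolynomial ℤ
  | 0, k => if k = 0 then 1 else 0
  | (n+1), k => T (2 * k) * qb2 n k + qb2 n (k-1)

/-- `h n k = Σ_{j∈ℤ} q^{2j²−j} [⌊n/2⌋ choose k+j] [⌈n/2⌉ choose k+1−j]`, binomials in base `q²`. -/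
noncomputable def h (n : ℕ) (k : ℤ) : LaurentPolynomial ℤ :=
  ∑ᶠ j : ℤ, T (2 * j ^ 2 - j) * qb2 (n / 2) (k + j) * qb2 ((n + 1) / 2) (k + 1 - j)

/-!
Alongside `h n k` consider its even companion `Σ_j q^{2j²+j} [⌊n/2⌋, k+j]_{q²} [⌈n/2⌉, k−j]_{q²}`,
which equals `[n, 2k]_q`. Passing from `n` to `n + 1` swaps `⌊n/2⌋` and `⌈n/2⌉` and raises the
second one by `1`. Expanding that binomial by the `q²`-Pascal rule and reflecting `j ↦ 1 − j` or
`j ↦ −j` in the two halves writes each sum at `n + 1` in terms of both sums at `n`, in the shape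
of the `q`-Pascal rule `[n+1, m] = q^m [n, m] + [n, m−1]`; induction on `n` finishes the proof.
-/

theorem qb_succ (n : ℕ) (k : ℤ) : qb (n + 1) k = T k * qb n k + qb n (k - 1) := rfl

theorem qb2_succ (n : ℕ) (k : ℤ) : qb2 (n + 1) k = T (2 * k) * qb2 n k + qb2 n (k - 1) := rfl

theorem qb2_zero_eq_qb_zero (k : ℤ) : qb2 0 k = qb 0 k := rfl

theorem qb2_eq_zero_of_neg : ∀ (n : ℕ) {k : ℤ}, k < 0 → qb2 n k = 0
  | 0, _, hk => if_neg hk.ne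
  | n + 1, _, hk => by
    rw [qb2_succ, qb2_eq_zero_of_neg n hk, qb2_eq_zero_of_neg n (by omega), mul_zero, add_zero]

theorem qb2_eq_zero_of_lt : ∀ (n : ℕ) {k : ℤ}, (n : ℤ) < k → qb2 n k = 0
  | 0, _, hk => if_neg hk.ne'
  | n + 1, _, hk => by
    rw [qb2_succ, qb2_eq_zero_of_lt n (by omega), qb2_eq_zero_of_lt n (by omega), mul_zero,
      add_zero]

theorem finite_support_mul_qb2_mul (f g : ℤ → LaurentPolynomial ℤ) (a : ℕ) (k : ℤ) :
    (Function.support fun j => f j * qb2 a (k + j) * g j).Finite := by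
  refine (Set.finite_Icc (-k) (a - k)).subset fun j hj => ?_
  rw [Function.mem_support] at hj
  by_contra hj'
  rw [Set.mem_Icc, not_and_or, not_le, not_le] at hj'
  refine hj ?_
  rcases hj' with hlo | hhi
  · rw [qb2_eq_zero_of_neg a (by omega), mul_zero, zero_mul]
  · rw [qb2_eq_zero_of_lt a (by omega), mul_zero, zero_mul]

noncomputable def thetaSum (a b : ℕ) (c d k l : ℤ) : LaurentPolynomial ℤ :=
  ∑ᶠ j : ℤ, T (2 * j ^ 2 + c * j + d) * qb2 a (k + j) * qb2 b (l - j)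

theorem h_eq_thetaSum (n : ℕ) (k : ℤ) :
    h n k = thetaSum (n / 2) ((n + 1) / 2) (-1) 0 k (k + 1) :=
  finsum_congr fun j => by ring_nf

theorem thetaSum_zero_left (b : ℕ) (c d k l : ℤ) :
    thetaSum 0 b c d k l = T (2 * k ^ 2 - c * k + d) * qb2 b (l + k) := by
  rw [thetaSum, finsum_eq_single _ (-k) fun j hj => by
    rw [qb2_zero_eq_qb_zero, qb, if_neg (by omega), mul_zero, zero_mul]]
  rw [qb2_zero_eq_qb_zero, qb, if_pos (by ring), mul_one]
  ring_nf

theorem T_mul_thetaSum (t : ℤ) (a b : ℕ) (c d k l : ℤ) :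
    T t * thetaSum a b c d k l = thetaSum a b c (t + d) k l := by
  rw [thetaSum, thetaSum, mul_finsum]
  refine finsum_congr fun j => ?_
  rw [show 2 * j ^ 2 + c * j + (t + d) = t + (2 * j ^ 2 + c * j + d) by ring, T_add t]
  simp only [mul_assoc]

theorem thetaSum_reflect (r : ℤ) (a b : ℕ) (c d k l : ℤ) :
    thetaSum a b c d k l = thetaSum b a (-4 * r - c) (2 * r ^ 2 + c * r + d) (l - r) (k + r) := by
  rw [thetaSum, thetaSum, ← finsum_comp_equiv (Equiv.subLeft r)]
  refine finsum_congr fun j => ?_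
  rw [Equiv.subLeft_apply, mul_right_comm]
  ring_nf

theorem thetaSum_succ_right (a b : ℕ) (c d k l : ℤ) :
    thetaSum a (b + 1) c d k l =
      thetaSum a b (c - 2) (d + 2 * l) k l + thetaSum a b c d k (l - 1) := by
  rw [thetaSum, thetaSum, thetaSum, ← finsum_add_distrib (finite_support_mul_qb2_mul _ _ a k)
    (finite_support_mul_qb2_mul _ _ a k)]
  refine finsum_congr fun j => ?_
  rw [qb2_succ, show 2 * j ^ 2 + (c - 2) * j + (d + 2 * l) = 2 * (l - j) + (2 * j ^ 2 + c * j + d)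
    by ring, T_add (2 * (l - j)), show l - 1 - j = l - j - 1 by ring]
  ring

theorem thetaSum_odd_succ (a b : ℕ) (k : ℤ) :
    thetaSum a (b + 1) (-1) 0 k (k + 1) =
      T (2 * k + 1) * thetaSum b a (-1) 0 k (k + 1) + thetaSum b a 1 0 k k := by
  rw [thetaSum_succ_right, thetaSum_reflect 1 a b, thetaSum_reflect 0 a b, T_mul_thetaSum]
  ring_nf

theorem thetaSum_even_succ (a b : ℕ) (k : ℤ) :
    thetaSum a (b + 1) 1 0 k k =
      T (2 * k) * thetaSum b a 1 0 k k + thetaSum b a (-1) 0 (k - 1) k := by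
  rw [thetaSum_succ_right, thetaSum_reflect 0 a b, thetaSum_reflect 0 a b, T_mul_thetaSum]
  ring_nf

theorem thetaSum_floor_ceil_half (n : ℕ) :
    (∀ k, thetaSum (n / 2) ((n + 1) / 2) (-1) 0 k (k + 1) = qb n (2 * k + 1)) ∧
      ∀ k, thetaSum (n / 2) ((n + 1) / 2) 1 0 k k = qb n (2 * k) := by
  induction n with
  | zero =>
    simp only [zero_add, Nat.zero_div, Nat.reduceDiv, thetaSum_zero_left, qb2_zero_eq_qb_zero]
    refine ⟨fun k => ?_, fun k => ?_⟩
    · rw [show k + 1 + k = 2 * k + 1 by ring, qb, if_neg (by omega), mul_zero]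
    · rcases eq_or_ne k 0 with rfl | hk
      · simp [qb]
      · rw [← two_mul, qb, if_neg (by omega), mul_zero]
  | succ n ih =>
    obtain ⟨h_odd, h_even⟩ := ih
    have halves : (n + 1 + 1) / 2 = n / 2 + 1 := by omega
    refine ⟨fun k => ?_, fun k => ?_⟩
    · rw [halves, thetaSum_odd_succ, h_odd, h_even, qb_succ, add_sub_cancel_right]
    · have h_odd_pred := h_odd (k - 1)
      rw [sub_add_cancel] at h_odd_pred
      rw [halves, thetaSum_even_succ, h_even, h_odd_pred, qb_succ]
      ring_nf

theorem stmt19 (n : ℕ) (k : ℤ) : h n k = qb n (2 * k + 1) := by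
  rw [h_eq_thetaSum]
  exact (thetaSum_floor_ceil_half n).1 k
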